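/- arXiv:2002.05816 — 4 statements merged into one kernel-verified Lean document; each statement's English description precedes it below -/
import Mathlib

section
/- Let G be an n-vertex graph with minimum degree at least (k/(k+1) + ε)n, where k ≥ 1 is an integer and ε > 0. Then for every j with 1 ≤ j ≤ k and every set J of j vertices of G, the induced subgraph G[N(J)] on the joint neighborhood N(J) has minimum degree at least ((k−j)/(k−j+1) + ε)·|N(J)|. -/
/-!
Let `m = n - δ(G)` bound the number of non-neighbours of any vertex. The vertices outside `N(J)`
are non-neighbours of some `u ∈ J`, so `|N(J)| ≥ n - j m`, and a vertex of `N(J)` has at least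
`|N(J)| - m` neighbours there. From `m ≤ (1/(k+1) - ε) n` one gets
`m ≤ (1/(k-j+1) - ε) |N(J)|`, which is the claimed minimum degree.
-/

open Finset

namespace SimpleGraph

variable {V : Type*} [Fintype V] (G : SimpleGraph V) [DecidableRel G.Adj]

def jointNeighborFinset (J : Finset V) : Finset V :=
  univ.filter fun v => ∀ u ∈ J, G.Adj u v

theorem card_filter_not_adj_le (s : Finset V) (v : V) :
    #(s.filter fun w => ¬ G.Adj v w) ≤ Fintype.card V - G.minDegree := by
  classical
  calc #(s.filter fun w => ¬ G.Adj v w) ≤ #(G.neighborFinset v)ᶜ :=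
        card_le_card fun w hw => by simpa using (mem_filter.mp hw).2
    _ = Fintype.card V - G.degree v := by rw [card_compl, card_neighborFinset_eq_degree]
    _ ≤ Fintype.card V - G.minDegree := Nat.sub_le_sub_left (G.minDegree_le_degree v) _

theorem card_le_card_filter_adj_add (s : Finset V) (v : V) :
    #s ≤ #(s.filter (G.Adj v)) + (Fintype.card V - G.minDegree) := by
  rw [← card_filter_add_card_filter_not (s := s) (G.Adj v)]
  exact Nat.add_le_add_left (G.card_filter_not_adj_le s v) _

theorem card_le_card_jointNeighborFinset_add (J : Finset V) :
    Fintype.card V ≤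
      #(G.jointNeighborFinset J) + #J * (Fintype.card V - G.minDegree) := by
  classical
  have hcover : (univ : Finset V) ⊆
      G.jointNeighborFinset J ∪ J.biUnion fun u => univ.filter fun w => ¬ G.Adj u w := by
    intro w _
    by_cases hw : ∀ u ∈ J, G.Adj u w
    · exact mem_union_left _ (by simpa [jointNeighborFinset] using hw)
    · exact mem_union_right _ (by simpa using hw)
  calc Fintype.card V = #(univ : Finset V) := card_univ.symm
    _ ≤ #(G.jointNeighborFinset J) + #(J.biUnion fun u => univ.filter fun w => ¬ G.Adj u w) :=
        (card_le_card hcover).trans (card_union_le _ _)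
    _ ≤ #(G.jointNeighborFinset J) + #J * (Fintype.card V - G.minDegree) := by
        gcongr
        exact card_biUnion_le_card_mul _ _ _ fun u _ => G.card_filter_not_adj_le univ u

end SimpleGraph

theorem density_le_of_deficiency_bounds {n d N M k j ε : ℝ} (hε : 0 ≤ ε) (hj : 0 ≤ j)
    (hjk : j ≤ k) (hn : 0 < n) (hδ : (k / (k + 1) + ε) * n ≤ d) (hdn : d ≤ n)
    (hN : n - j * (n - d) ≤ N) (hM : N - (n - d) ≤ M) :
    ((k - j) / (k - j + 1) + ε) * N ≤ M := by
  set m := n - d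
  have hm : 0 ≤ m := sub_nonneg.mpr hdn
  have hk : 0 < k + 1 := by linarith
  have hs : 0 < k - j + 1 := by linarith
  have hδ' : (k + 1) * m ≤ (1 - (k + 1) * ε) * n := by
    rw [div_add' _ _ _ hk.ne', div_mul_eq_mul_div, div_le_iff₀ hk] at hδ
    linarith
  have hc : 0 ≤ 1 - (k - j + 1) * ε := by
    have : 0 ≤ 1 - (k + 1) * ε :=
      (mul_nonneg_iff_of_pos_right hn).mp ((mul_nonneg hk.le hm).trans hδ')
    nlinarith [mul_nonneg hj hε]
  have hsm : (k - j + 1) * m ≤ (1 - (k - j + 1) * ε) * N :=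
    calc (k - j + 1) * m ≤ (1 - (k - j + 1) * ε) * (n - j * m) := by
          nlinarith [mul_nonneg (mul_nonneg hj hε) hn.le,
            mul_nonneg (mul_nonneg hj hε) (mul_nonneg hs.le hm)]
      _ ≤ (1 - (k - j + 1) * ε) * N := mul_le_mul_of_nonneg_left hN hc
  rw [div_add' _ _ _ hs.ne', div_mul_eq_mul_div, div_le_iff₀ hs]
  nlinarith

theorem stmt1_general {n k : ℕ} (ε : ℝ) (hε : 0 < ε)
    (G : SimpleGraph (Fin n)) [DecidableRel G.Adj]
    (hδ : ((k : ℝ) / (k + 1) + ε) * n ≤ G.minDegree)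
    (j : ℕ) (hj2 : j ≤ k)
    (J : Finset (Fin n)) (hJ : J.card = j) :
    ∀ v ∈ univ.filter fun v => ∀ u ∈ J, G.Adj u v,
      (((k : ℝ) - j) / ((k : ℝ) - j + 1) + ε) *
          ((univ.filter fun v => ∀ u ∈ J, G.Adj u v).card : ℝ) ≤
        ((univ.filter fun w => (∀ u ∈ J, G.Adj u w) ∧ G.Adj v w).card : ℝ) := by
  intro v _
  -- `ext` rather than `rfl`: over `Fin n` the filters use `Nat.decidableForallFin`.
  have hNJ : (univ.filter fun w => ∀ u ∈ J, G.Adj u w) = G.jointNeighborFinset J := by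
    ext; simp [SimpleGraph.jointNeighborFinset]
  have hMJ : (univ.filter fun w => (∀ u ∈ J, G.Adj u w) ∧ G.Adj v w) =
      (G.jointNeighborFinset J).filter (G.Adj v) := by
    ext; simp [SimpleGraph.jointNeighborFinset]
  rw [hNJ, hMJ]
  have hδn : G.minDegree ≤ n := by
    simpa using (G.minDegree_le_degree v).trans (G.degree_lt_card_verts v).le
  have hN := G.card_le_card_jointNeighborFinset_add J
  have hM := G.card_le_card_filter_adj_add (G.jointNeighborFinset J) v
  rw [hJ] at hN
  rw [Fintype.card_fin, ← Nat.cast_le (α := ℝ)] at hN hM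
  push_cast [Nat.cast_sub hδn] at hN hM
  exact density_le_of_deficiency_bounds hε.le j.cast_nonneg (by exact_mod_cast hj2)
    (by exact_mod_cast v.pos) hδ (by exact_mod_cast hδn) (by linarith) (by linarith)

theorem stmt1 {n k : ℕ} (hk : 1 ≤ k) (ε : ℝ) (hε : 0 < ε)
    (G : SimpleGraph (Fin n)) [DecidableRel G.Adj]
    (hδ : ((k : ℝ) / (k + 1) + ε) * n ≤ G.minDegree)
    (j : ℕ) (hj1 : 1 ≤ j) (hj2 : j ≤ k)
    (J : Finset (Fin n)) (hJ : J.card = j) :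
    ∀ v ∈ univ.filter fun v => ∀ u ∈ J, G.Adj u v,
      (((k : ℝ) - j) / ((k : ℝ) - j + 1) + ε) *
          ((univ.filter fun v => ∀ u ∈ J, G.Adj u v).card : ℝ) ≤
        ((univ.filter fun w => (∀ u ∈ J, G.Adj u w) ∧ G.Adj v w).card : ℝ) :=
  stmt1_general ε hε G hδ j hj2 J hJ
end

section
/- Let ℓ ≥ 2 and r ≥ 1 be integers with ℓ ≥ r(r+1), and let t ≥ 1. For every subgraph B' of the braid graph B(ℓ, r, t) with at least one edge, e_{B'} ≤ (ℓ/2)·(v_{B'} − 1). Consequently, the maximum of e_H/(v_H − 1) over subgraphs H of B(ℓ, r, t) with at least one edge equals ℓ/2, attained by K_ℓ. -/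
/-!
Count darts (ordered adjacent pairs) instead of edges, sorting each dart by the lower of the
layers (cliques) of its two endpoints. Inside a layer with `n ≥ 1` vertices there are at most
`n (n - 1) ≤ ℓ (n - 1)` darts. Between a layer and the next one there are at most
`r (r + 1) ≤ ℓ` darts, as the bridge edges form a staircase of `r (r + 1) / 2` cells. No dart
leaves the topmost occupied layer upwards, so with `s` occupied layers
`2 e ≤ ℓ (v - s) + ℓ (s - 1) = ℓ (v - 1)`. A single clique `K_ℓ` attains the bound.
-/

/-- The braid graph `B(ℓ, r, t)`: `t` vertex-disjoint ordered copies of `K_ℓ`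
(vertex `(i, a)` is the `a`-th vertex of the `i`-th clique), where for each pair
of consecutive cliques the last `r` vertices `v_1, …, v_r` of the first and the
first `r` vertices `u_1, …, u_r` of the second are `r`-bridged: `v_j` is adjacent
to `u_1, …, u_j`.  With `v_j` at position `a = ℓ - r + (j-1)` and `u_{j'}` at
position `b = j' - 1`, the bridge condition `j' ≤ j` reads `b + ℓ ≤ a + r`. -/
def braid (ℓ r t : ℕ) : SimpleGraph (Fin t × Fin ℓ) where
  Adj x y :=
    (x.1 = y.1 ∧ x.2 ≠ y.2) ∨
    ((x.1 : ℕ) + 1 = (y.1 : ℕ) ∧ (y.2 : ℕ) + ℓ ≤ (x.2 : ℕ) + r) ∨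
    ((y.1 : ℕ) + 1 = (x.1 : ℕ) ∧ (x.2 : ℕ) + ℓ ≤ (y.2 : ℕ) + r)
  symm := ⟨by
    intro x y h
    rcases h with ⟨h1, h2⟩ | ⟨h1, h2⟩ | ⟨h1, h2⟩
    · exact Or.inl ⟨h1.symm, h2.symm⟩
    · exact Or.inr (Or.inr ⟨h1, h2⟩)
    · exact Or.inr (Or.inl ⟨h1, h2⟩)⟩
  loopless := ⟨by
    intro x h
    rcases h with ⟨_, h⟩ | ⟨h, _⟩ | ⟨h, _⟩
    · exact h rfl
    · omega
    · omega⟩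

open Finset SimpleGraph

section Layers

variable {V : Type*} [Fintype V] {G : SimpleGraph V} [DecidableRel G.Adj]
  (L : V → ℕ) {W : Finset V}

lemma card_darts_within_layer_le (hW : ∀ d : G.Dart, d.fst ∈ W) (i : ℕ) :
    #{d : G.Dart | L d.fst = i ∧ L d.snd = i} ≤
      #{x ∈ W | L x = i} * (#{x ∈ W | L x = i} - 1) := by
  calc _ ≤ #({x ∈ W | L x = i}.offDiag) := by
        refine card_le_card_of_injOn Dart.toProd (fun d hd => ?_) Dart.toProd_injective.injOn
        simp only [coe_filter, mem_univ, true_and, Set.mem_ofPred_eq] at hd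
        simp only [coe_offDiag, coe_filter, Set.mem_offDiag, Set.mem_ofPred_eq]
        exact ⟨⟨hW d, hd.1⟩, ⟨hW d.symm, hd.2⟩, d.fst_ne_snd⟩
    _ = _ := by rw [offDiag_card, Nat.mul_sub_one]

theorem two_mul_card_edgeFinset_le_of_layers [DecidableEq V] {ℓ : ℕ}
    (hW : ∀ d : G.Dart, d.fst ∈ W) (hlayer : ∀ i, #{x ∈ W | L x = i} ≤ ℓ)
    (hbridge : ∀ i, #{d : G.Dart | min (L d.fst) (L d.snd) = i ∧ L d.fst ≠ L d.snd} ≤ ℓ) :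
    2 * #G.edgeFinset ≤ ℓ * (#W - 1) := by
  rw [← dart_card_eq_twice_card_edges, ← card_univ]
  rcases isEmpty_or_nonempty G.Dart with hempty | ⟨⟨d₀⟩⟩
  · simp
  set S := W.image L
  have hS : S.Nonempty := ⟨_, mem_image_of_mem L (hW d₀)⟩
  set n : ℕ → ℕ := fun i => #{x ∈ W | L x = i}
  set bridge : ℕ → ℕ :=
    fun i => #{d : G.Dart | min (L d.fst) (L d.snd) = i ∧ L d.fst ≠ L d.snd}
  have hfiber : #(univ : Finset G.Dart) =
      ∑ i ∈ S, (#{d : G.Dart | L d.fst = i ∧ L d.snd = i} + bridge i) := by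
    rw [card_eq_sum_card_fiberwise (f := fun d : G.Dart => min (L d.fst) (L d.snd)) (t := S)
      (fun d _ => by
        change min (L d.fst) (L d.snd) ∈ S
        rcases min_choice (L d.fst) (L d.snd) with h | h <;> rw [h]
        exacts [mem_image_of_mem L (hW d), mem_image_of_mem L (hW d.symm)])]
    refine sum_congr rfl fun i _ => ?_
    rw [← card_filter_add_card_filter_not (fun d : G.Dart => L d.fst = L d.snd),
      filter_filter, filter_filter]
    congr 2
    ext d; simp only [mem_filter, mem_univ, true_and]; omega
  have hbridge_top : ∀ i ∈ S, bridge i ≠ 0 → i ∈ S.erase (S.max' hS) := by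
    intro i hi hne
    obtain ⟨d, hd⟩ := card_ne_zero.mp hne
    simp only [mem_filter, mem_univ, true_and] at hd
    refine mem_erase.mpr ⟨fun hmax => ?_, hi⟩
    have h₁ := S.le_max' _ (mem_image_of_mem L (hW d))
    have h₂ : L d.snd ≤ S.max' hS := S.le_max' _ (mem_image_of_mem L (hW d.symm))
    omega
  have hW_card : ∑ i ∈ S, n i = #W := (card_eq_sum_card_image L W).symm
  have hn_pos : ∀ i ∈ S, 1 ≤ n i := fun i hi => by
    obtain ⟨x, hx, rfl⟩ := mem_image.mp hi
    exact card_pos.mpr ⟨x, mem_filter.mpr ⟨hx, rfl⟩⟩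
  have hS_card : #S ≤ #W := card_image_le
  calc #(univ : Finset G.Dart)
      = ∑ i ∈ S, #{d : G.Dart | L d.fst = i ∧ L d.snd = i} + ∑ i ∈ S, bridge i := by
        rw [hfiber, sum_add_distrib]
    _ ≤ ∑ i ∈ S, ℓ * (n i - 1) + ∑ i ∈ S.erase (S.max' hS), ℓ := by
        gcongr with i
        · exact (card_darts_within_layer_le L hW i).trans (Nat.mul_le_mul_right _ (hlayer i))
        · exact (sum_le_sum_of_ne_zero hbridge_top).trans (sum_le_sum fun i _ => hbridge i)
    _ = ℓ * (#W - #S) + ℓ * (#S - 1) := by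
        rw [← mul_sum, sum_tsub_distrib _ hn_pos, hW_card, ← card_eq_sum_ones, sum_const,
          card_erase_of_mem (S.max'_mem hS), smul_eq_mul, mul_comm (#S - 1)]
    _ = ℓ * (#W - 1) := by
        rw [← mul_add]; congr 1; have := hS.card_pos; omega

end Layers

def bridgePairs (ℓ r : ℕ) : Finset (Fin ℓ × Fin ℓ) := {p | (p.2 : ℕ) + ℓ ≤ p.1 + r}

lemma card_bridgePairs_mul_two_le (ℓ r : ℕ) : #(bridgePairs ℓ r) * 2 ≤ r * (r + 1) := by
  have hinj : #(bridgePairs ℓ r) ≤ #((range r).sigma fun j => range (j + 1)) := by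
    refine card_le_card_of_injOn (fun p => ⟨p.1 + r - ℓ, p.2⟩) (fun p hp => ?_) ?_
    · simp only [bridgePairs, coe_filter, mem_univ, true_and, Set.mem_ofPred_eq] at hp
      simp only [coe_sigma, Set.mem_sigma_iff, coe_range, Set.mem_Iio]
      omega
    · rintro p hp q hq hpq
      simp only [bridgePairs, coe_filter, mem_univ, true_and, Set.mem_ofPred_eq] at hp hq
      simp only [Sigma.mk.inj_iff, heq_eq_eq] at hpq
      ext <;> omega
  have hsum : (∑ j ∈ range r, (j + 1)) * 2 = r * (r + 1) := by
    have := sum_range_id_mul_two (r + 1)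
    rw [sum_range_succ', add_zero, Nat.add_sub_cancel] at this
    rw [this, mul_comm]
  rw [card_sigma] at hinj
  simpa [hsum] using Nat.mul_le_mul_right 2 hinj

section Darts

variable {ℓ r t : ℕ} {G : SimpleGraph (Fin t × Fin ℓ)} [DecidableRel G.Adj]

lemma card_darts_to_next_layer_le (hG : G ≤ braid ℓ r t) (i : ℕ) :
    #{d : G.Dart | (d.fst.1 : ℕ) = i ∧ (d.snd.1 : ℕ) = i + 1} ≤ #(bridgePairs ℓ r) := by
  refine card_le_card_of_injOn (fun d => (d.fst.2, d.snd.2)) (fun d hd => ?_) ?_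
  · simp only [coe_filter, mem_univ, true_and, Set.mem_ofPred_eq] at hd
    simp only [bridgePairs, coe_filter, mem_univ, true_and, Set.mem_ofPred_eq]
    rcases hG d.adj with ⟨h, -⟩ | ⟨-, h⟩ | ⟨h, -⟩
    · have := congrArg Fin.val h; omega
    · exact h
    · omega
  · rintro d hd d' hd' hdd
    simp only [coe_filter, mem_univ, true_and, Set.mem_ofPred_eq] at hd hd'
    simp only [Prod.mk.injEq] at hdd
    exact Dart.ext _ _ (Prod.ext (Prod.ext (Fin.ext (by omega)) hdd.1)
      (Prod.ext (Fin.ext (by omega)) hdd.2))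

lemma card_darts_from_next_layer_eq (i : ℕ) :
    #{d : G.Dart | (d.snd.1 : ℕ) = i ∧ (d.fst.1 : ℕ) = i + 1} =
      #{d : G.Dart | (d.fst.1 : ℕ) = i ∧ (d.snd.1 : ℕ) = i + 1} :=
  card_nbij' Dart.symm Dart.symm (fun d hd => by simpa using hd) (fun d hd => by simpa using hd)
    (fun d _ => d.symm_symm) (fun d _ => d.symm_symm)

lemma card_bridge_darts_le (hG : G ≤ braid ℓ r t) (i : ℕ) :
    #{d : G.Dart | min (d.fst.1 : ℕ) d.snd.1 = i ∧ (d.fst.1 : ℕ) ≠ d.snd.1} ≤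
      r * (r + 1) := by
  calc _ ≤ #(({d : G.Dart | (d.fst.1 : ℕ) = i ∧ (d.snd.1 : ℕ) = i + 1} : Finset _) ∪
          ({d : G.Dart | (d.snd.1 : ℕ) = i ∧ (d.fst.1 : ℕ) = i + 1} : Finset _)) := by
        refine card_le_card fun d hd => ?_
        simp only [mem_filter, mem_univ, true_and, mem_union] at hd ⊢
        rcases hG d.adj with ⟨h, -⟩ | ⟨h, -⟩ | ⟨h, -⟩
        · exact absurd (congrArg Fin.val h) hd.2
        · omega
        · omega
    _ ≤ #(bridgePairs ℓ r) * 2 := by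
        grw [card_union_le, card_darts_from_next_layer_eq, card_darts_to_next_layer_le hG]; omega
    _ ≤ r * (r + 1) := card_bridgePairs_mul_two_le ℓ r

end Darts

theorem braid_subgraph_two_mul_ncard_edgeSet_le {ℓ r t : ℕ} (hlr : r * (r + 1) ≤ ℓ)
    (B' : (braid ℓ r t).Subgraph) :
    2 * B'.edgeSet.ncard ≤ ℓ * (B'.verts.ncard - 1) := by
  classical
  have hlayer (i : ℕ) : #{x ∈ B'.verts.toFinset | (x.1 : ℕ) = i} ≤ ℓ := by
    simpa using card_le_card_of_injOn Prod.snd (fun x _ => mem_univ x.2)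
      (t := (univ : Finset (Fin ℓ))) fun x hx y hy hxy => by
        simp only [coe_filter, Set.mem_ofPred_eq] at hx hy
        exact Prod.ext (Fin.ext (hx.2.trans hy.2.symm)) hxy
  have h := two_mul_card_edgeFinset_le_of_layers (G := B'.spanningCoe) (fun x => (x.1 : ℕ))
    (fun d => Set.mem_toFinset.mpr (B'.edge_vert d.adj)) hlayer
    fun i => (card_bridge_darts_le B'.spanningCoe_le i).trans hlr
  rwa [← Subgraph.edgeSet_spanningCoe, ← coe_edgeFinset, Set.ncard_coe_finset,
    Set.ncard_eq_toFinset_card']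

theorem braid_exists_clique_subgraph (ℓ r : ℕ) {t : ℕ} (i : Fin t) :
    ∃ H : (braid ℓ r t).Subgraph, H.edgeSet.ncard = ℓ.choose 2 ∧ H.verts.ncard = ℓ := by
  classical
  let f : (⊤ : SimpleGraph (Fin ℓ)) →g braid ℓ r t :=
    ⟨fun a => (i, a), fun h => Or.inl ⟨rfl, h⟩⟩
  have hf : Function.Injective f := fun a b h => congrArg Prod.snd h
  refine ⟨Subgraph.map f ⊤, ?_, ?_⟩
  · rw [Subgraph.edgeSet_map, Set.ncard_image_of_injective _ (Sym2.map.injective hf),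
      Subgraph.edgeSet_top, Set.ncard_eq_toFinset_card', ← edgeFinset,
      card_edgeFinset_top_eq_card_choose_two, Fintype.card_fin]
  · rw [Subgraph.map_verts, Subgraph.verts_top, Set.ncard_image_of_injective _ hf,
      Set.ncard_univ, Nat.card_fin]

theorem stmt8_general (ℓ r t : ℕ) (hl : 2 ≤ ℓ) (hlr : r * (r + 1) ≤ ℓ)
    (ht : 1 ≤ t) :
    (∀ B' : (braid ℓ r t).Subgraph, 1 ≤ B'.edgeSet.ncard →
      (B'.edgeSet.ncard : ℝ) ≤ ((ℓ : ℝ) / 2) * ((B'.verts.ncard : ℝ) - 1)) ∧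
    (∃ H : (braid ℓ r t).Subgraph, 1 ≤ H.edgeSet.ncard ∧
      (H.edgeSet.ncard : ℝ) = ((ℓ : ℝ) / 2) * ((H.verts.ncard : ℝ) - 1)) := by
  refine ⟨fun B' hB' => ?_, ?_⟩
  · obtain ⟨e, he⟩ := Set.nonempty_of_ncard_ne_zero (by omega : B'.edgeSet.ncard ≠ 0)
    have hv : 1 ≤ B'.verts.ncard :=
      (Set.ncard_pos (Set.toFinite _)).mpr ⟨_, B'.mem_verts_of_mem_edge he (Sym2.out_fst_mem e)⟩
    have h : ((2 * B'.edgeSet.ncard : ℕ) : ℝ) ≤ ((ℓ * (B'.verts.ncard - 1) : ℕ) : ℝ) :=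
      Nat.cast_le.mpr (braid_subgraph_two_mul_ncard_edgeSet_le hlr B')
    push_cast [Nat.cast_sub hv] at h
    linarith
  · obtain ⟨H, hE, hV⟩ := braid_exists_clique_subgraph ℓ r ⟨0, ht⟩
    refine ⟨H, hE ▸ Nat.choose_pos hl, ?_⟩
    rw [hE, hV, Nat.cast_choose_two]
    ring

theorem stmt8 (ℓ r t : ℕ) (hl : 2 ≤ ℓ) (hr : 1 ≤ r) (hlr : r * (r + 1) ≤ ℓ)
    (ht : 1 ≤ t) :
    (∀ B' : (braid ℓ r t).Subgraph, 1 ≤ B'.edgeSet.ncard →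
      (B'.edgeSet.ncard : ℝ) ≤ ((ℓ : ℝ) / 2) * ((B'.verts.ncard : ℝ) - 1)) ∧
    (∃ H : (braid ℓ r t).Subgraph, 1 ≤ H.edgeSet.ncard ∧
      (H.edgeSet.ncard : ℝ) = ((ℓ : ℝ) / 2) * ((H.verts.ncard : ℝ) - 1)) :=
  stmt8_general ℓ r t hl hlr ht
end

section
/- Let t', ℓ, r be positive integers with ℓ ≥ r(r+1), and let s_1, …, s_{t'} be integers with 1 ≤ s_j ≤ ℓ for each j. Then ∑_{j=1}^{t'} C(s_j, 2) + (t'−1)·C(r+1, 2) ≤ (ℓ/2)·( ∑_{j=1}^{t'} (s_j − 1) + (t' − 1) ). -/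
open Finset

theorem stmt9 (t' ℓ r : ℕ) (ht : 1 ≤ t') (hr : 1 ≤ r) (hlr : r * (r + 1) ≤ ℓ)
    (s : Fin t' → ℕ) (hs1 : ∀ j, 1 ≤ s j) (hs2 : ∀ j, s j ≤ ℓ) :
    ((∑ j, Nat.choose (s j) 2 : ℕ) : ℝ) + ((t' - 1 : ℕ) : ℝ) * (Nat.choose (r + 1) 2 : ℕ) ≤
      ((ℓ : ℝ) / 2) * (((∑ j, (s j - 1) : ℕ) : ℝ) + ((t' - 1 : ℕ) : ℝ)) := by
  have hterm : ∀ j, Nat.choose (s j) 2 * 2 ≤ ℓ * (s j - 1) := by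
    intro j
    have h1 := hs1 j
    have h2 := hs2 j
    have hc : Nat.choose (s j) 2 * 2 = s j * (s j - 1) := by
      rw [Nat.choose_two_right]
      have : 2 ∣ s j * (s j - 1) := by
        obtain ⟨k, hk⟩ : ∃ k, s j = k + 1 := ⟨s j - 1, by omega⟩
        rw [hk]
        simpa [Nat.mul_comm] using (Nat.even_mul_succ_self k).two_dvd
      omega
    rw [hc]
    exact Nat.mul_le_mul_right _ h2
  have hsum : (∑ j, Nat.choose (s j) 2) * 2 ≤ ℓ * ∑ j, (s j - 1) := by
    rw [sum_mul, mul_sum]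
    exact Finset.sum_le_sum fun j _ => hterm j
  have hr2 : Nat.choose (r + 1) 2 * 2 ≤ ℓ := by
    have : Nat.choose (r + 1) 2 * 2 = (r + 1) * r := by
      rw [Nat.choose_two_right]
      simp only [Nat.add_sub_cancel]
      have : 2 ∣ (r + 1) * r := by
        simpa [Nat.mul_comm] using (Nat.even_mul_succ_self r).two_dvd
      omega
    rw [this]
    calc (r + 1) * r = r * (r + 1) := Nat.mul_comm _ _
      _ ≤ ℓ := hlr
  have hsumR : ((∑ j, Nat.choose (s j) 2 : ℕ) : ℝ) * 2 ≤ (ℓ : ℝ) * ((∑ j, (s j - 1) : ℕ) : ℝ) := by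
    exact_mod_cast hsum
  have hr2R : ((Nat.choose (r + 1) 2 : ℕ) : ℝ) * 2 ≤ (ℓ : ℝ) := by exact_mod_cast hr2
  have hB : (0 : ℝ) ≤ ((t' - 1 : ℕ) : ℝ) := Nat.cast_nonneg _
  nlinarith [mul_le_mul_of_nonneg_left hr2R hB]
end

section
/- Let k ≥ 1, ℓ ≥ 1, 1 ≤ r ≤ ℓ, and let t ≥ 2 be even. Let C be the (ℓt/2)-blow-up of the k-th power of the cycle on 2k+2 vertices, with blow-up classes W_1, …, W_{2k+2}. Then C contains a spanning copy of the ℓ-blow-up of the k-path on (k+1)t vertices. Specifically, splitting each W_i into t/2 sets of size ℓ labelled u_i, u_{i+(2k+2)}, …, u_{i+(t/2−1)(2k+2)}, the sequence of blocks (u_1, u_2, …, u_{t(k+1)}) has the property that each block is an independent set of size ℓ in C and any two blocks u_i, u_j with 0 < j − i ≤ k induce a complete bipartite graph in C. -/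
/-- The `ℓ`-blow-up of the `k`-path on `N/ℓ` blocks, in blow-up order. -/
def pathBlowup (k ℓ N : ℕ) : SimpleGraph (Fin N) where
  Adj i j := (i : ℕ) / ℓ ≠ (j : ℕ) / ℓ ∧
    ((((i : ℕ) / ℓ : ℕ) : ℤ) - (((j : ℕ) / ℓ : ℕ) : ℤ)).natAbs ≤ k
  symm := ⟨by
    intro i j h
    exact ⟨Ne.symm h.1, by have := h.2; omega⟩⟩
  loopless := ⟨by
    intro i h
    exact h.1 rfl⟩

/-- The `m`-th power of the cycle on `n` vertices. -/
def cyclePow (m n : ℕ) : SimpleGraph (Fin n) where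
  Adj i j := i ≠ j ∧
    ((((i : ℕ) : ℤ) - ((j : ℕ) : ℤ)).natAbs ≤ m ∨
      n ≤ (((i : ℕ) : ℤ) - ((j : ℕ) : ℤ)).natAbs + m)
  symm := ⟨by
    intro i j h
    exact ⟨Ne.symm h.1, by have := h.2; omega⟩⟩
  loopless := ⟨by
    intro i h
    exact h.1 rfl⟩

/-!
Send the `b`-th block of the path to the blow-up class `b mod (2k+2)`. Each class receives
exactly `t/2` blocks, so this is a bijection, and two blocks at distance `d` with `0 < d ≤ k`
along the path land in classes at cyclic distance `d` or `2k+2-d ≥ k+2`; either way they are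
distinct and adjacent in `C^k_{2k+2}`. Blocks themselves stay inside one class, hence independent.
-/

section CycleFolding

variable {k n : ℕ} [NeZero n]

theorem cyclePow_adj_ofNat_add (hkn : k < n) (a : ℕ) {d : ℕ} (hd : 0 < d) (hdk : d ≤ k) :
    (cyclePow k n).Adj (Fin.ofNat n a) (Fin.ofNat n (a + d)) := by
  have hx : a % n < n := Nat.mod_lt _ (NeZero.pos n)
  have hwrap : (a + d) % n = a % n + d ∨ (a + d) % n + n = a % n + d := by
    rw [Nat.add_mod, Nat.mod_eq_of_lt (hdk.trans_lt hkn)]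
    rcases lt_or_ge (a % n + d) n with h | h
    · exact .inl (Nat.mod_eq_of_lt h)
    · right
      rw [Nat.mod_eq_sub_mod h, Nat.mod_eq_of_lt (by omega)]
      omega
  simp only [cyclePow, ne_eq, Fin.ext_iff, Fin.val_ofNat]
  generalize a % n = x at *
  generalize (a + d) % n = y at *
  omega

theorem cyclePow_adj_ofNat (hkn : k < n) {a b : ℕ} (hab : a ≠ b)
    (hdist : ((a : ℤ) - b).natAbs ≤ k) :
    (cyclePow k n).Adj (Fin.ofNat n a) (Fin.ofNat n b) := by
  rcases hab.lt_or_gt with h | h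
  · obtain ⟨d, rfl⟩ := Nat.exists_eq_add_of_le h.le
    exact cyclePow_adj_ofNat_add hkn a (by omega) (by omega)
  · obtain ⟨d, rfl⟩ := Nat.exists_eq_add_of_le h.le
    exact (cyclePow_adj_ofNat_add hkn b (by omega) (by omega)).symm

end CycleFolding

section BlockFolding

variable {ℓ n t : ℕ} [NeZero n]

/-- Path block `b = i / ℓ` is the paper's `u_{b+1}`: it lands in class `b % n`, as the
`(b / n)`-th of its sub-blocks of size `ℓ`. -/
def foldBlocks (ℓ n t : ℕ) [NeZero n] (i : Fin (ℓ * (n * t))) : Fin n × Fin (ℓ * t) :=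
  (Fin.ofNat n (i / ℓ),
    ⟨i % ℓ + ℓ * (i / ℓ / n),
      Nat.add_mul_lt_mul_of_lt_of_lt
        (Nat.mod_lt _ (Nat.pos_of_mul_pos_right i.pos))
        (Nat.div_lt_of_lt_mul (Nat.div_lt_of_lt_mul i.isLt))⟩)

theorem foldBlocks_fst (i : Fin (ℓ * (n * t))) : (foldBlocks ℓ n t i).1 = Fin.ofNat n (i / ℓ) :=
  rfl

theorem foldBlocks_injective : Function.Injective (foldBlocks ℓ n t) := by
  intro i j hij
  have hℓ : 0 < ℓ := Nat.pos_of_mul_pos_right i.pos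
  have val_eq (i : Fin (ℓ * (n * t))) :
      (i : ℕ) = ((foldBlocks ℓ n t i).2 : ℕ) % ℓ
        + ℓ * (((foldBlocks ℓ n t i).1 : ℕ) + n * (((foldBlocks ℓ n t i).2 : ℕ) / ℓ)) := by
    obtain ⟨hq, hp⟩ :=
      (Nat.div_mod_unique (d := (i : ℕ) / ℓ / n) hℓ).2 ⟨rfl, Nat.mod_lt (i : ℕ) hℓ⟩
    simp only [foldBlocks, Fin.val_ofNat, hq, hp, Nat.mod_add_div]
  exact Fin.ext ((val_eq i).trans (hij ▸ val_eq j).symm)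

theorem foldBlocks_bijective : Function.Bijective (foldBlocks ℓ n t) := by
  rw [Fintype.bijective_iff_injective_and_card]
  refine ⟨foldBlocks_injective, ?_⟩
  simp only [Fintype.card_fin, Fintype.card_prod]
  ring

end BlockFolding

theorem stmt17_general (k ℓ t₂ : ℕ) :
    ∃ f : Fin (ℓ * ((k + 1) * (2 * t₂))) → Fin (2 * k + 2) × Fin (ℓ * t₂),
      Function.Bijective f ∧
      (∀ i j, (pathBlowup k ℓ (ℓ * ((k + 1) * (2 * t₂)))).Adj i j →
        ((cyclePow k (2 * k + 2)).comap Prod.fst).Adj (f i) (f j)) ∧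
      (∀ i j : Fin (ℓ * ((k + 1) * (2 * t₂))), i ≠ j → (i : ℕ) / ℓ = (j : ℕ) / ℓ →
        ¬((cyclePow k (2 * k + 2)).comap Prod.fst).Adj (f i) (f j)) := by
  have hsize : ℓ * ((k + 1) * (2 * t₂)) = ℓ * ((2 * k + 2) * t₂) := by ring
  refine ⟨foldBlocks ℓ (2 * k + 2) t₂ ∘ Fin.cast hsize,
    foldBlocks_bijective.comp (finCongr hsize).bijective, ?_, ?_⟩
  · rintro i j ⟨hne, hdist⟩
    exact cyclePow_adj_ofNat (by omega) hne hdist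
  · intro i j _ hblock hadj
    exact (SimpleGraph.comap_adj.1 hadj).ne
      (by simp only [Function.comp_apply, foldBlocks_fst, Fin.val_cast, hblock])

/-- For `t = 2·t₂` even, the `(ℓt/2)`-blow-up `C` of `C^k_{2k+2}` (realized as
`(cyclePow k (2k+2)).comap Prod.fst` on `Fin (2k+2) × Fin (ℓ·t₂)`, with blow-up
classes `W_i` the fibers of `Prod.fst`) contains a spanning copy of the `ℓ`-blow-up
of the `k`-path on `(k+1)t` vertices: there is a bijection `f` carrying adjacency of
the blow-up path into `C`, and carrying each size-`ℓ` block of the blow-up path onto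
an independent set of `C`. -/
theorem stmt17 (k ℓ r t₂ : ℕ) (hk : 1 ≤ k) (hl : 1 ≤ ℓ) (hr1 : 1 ≤ r) (hr2 : r ≤ ℓ)
    (ht : 1 ≤ t₂) :
    ∃ f : Fin (ℓ * ((k + 1) * (2 * t₂))) → Fin (2 * k + 2) × Fin (ℓ * t₂),
      Function.Bijective f ∧
      (∀ i j, (pathBlowup k ℓ (ℓ * ((k + 1) * (2 * t₂)))).Adj i j →
        ((cyclePow k (2 * k + 2)).comap Prod.fst).Adj (f i) (f j)) ∧
      (∀ i j : Fin (ℓ * ((k + 1) * (2 * t₂))), i ≠ j → (i : ℕ) / ℓ = (j : ℕ) / ℓ →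
        ¬((cyclePow k (2 * k + 2)).comap Prod.fst).Adj (f i) (f j)) :=
  stmt17_general k ℓ t₂
end
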